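/- A subset S ⊆ S² is locally octahedral (i.e., (u·v)(u·w)(v·w) ≥ 0 for all u, v, w ∈ S) if and only if every subset of S of at most 3 elements is octahedral with respect to some regular octahedron. -/

import Mathlib

/-!
For an octahedron with basis `u` and signs `ε`, every point of an octahedral set lies, after a
possible reflection `x ↦ -x`, in the orthant `{y | ∀ i, 0 ≤ εᵢ ⟪y, uᵢ⟫}`. By Parseval, points of
this orthant have nonnegative inner products, and reflections do not change the sign of
`⟪a, b⟫ ⟪a, c⟫ ⟪b, c⟫`.

Conversely, let `a, b, c` be unit vectors with `p = ⟪a, b⟫`, `q = ⟪a, c⟫`, `r = ⟪b, c⟫` and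
`pqr ≥ 0`. Since `(pq)² (pr)² (qr)² = (pqr)⁴ ≤ (pqr)³`, after relabelling `(pq)² ≤ pqr`. The
Gram–Schmidt basis `e` of `a, b` has `e₀ = a` and `⟪b, e₂⟫ = 0`, so Parseval gives
`⟪b, e₁⟫ ⟪c, e₁⟫ = r - pq` and hence `p · q · ⟪b, e₁⟫ ⟪c, e₁⟫ = pqr - (pq)² ≥ 0`. Replacing `b`
and `c` by `±b` and `±c` then makes the coordinates of the three points along each `eᵢ` share a
sign, which is exactly what the signs `εᵢ` can absorb.
-/

/-- A set is octahedral with respect to some regular octahedron, given by an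
orthonormal basis together with signs, if all its points lie (coherently) in a
pair of opposite closed orthants. -/
def Octahedral (S : Set (EuclideanSpace ℝ (Fin 3))) : Prop :=
  ∃ u : Fin 3 → EuclideanSpace ℝ (Fin 3), Orthonormal ℝ u ∧
    ∃ ε : Fin 3 → ℝ, (∀ i, ε i = 1 ∨ ε i = -1) ∧
      ∀ x ∈ S, (∀ i, 0 ≤ ε i * (inner ℝ x (u i) : ℝ)) ∨ (∀ i, ε i * (inner ℝ x (u i) : ℝ) ≤ 0)

open scoped RealInnerProductSpace
open InnerProductSpace

local notation "ℝ³" => EuclideanSpace ℝ (Fin 3)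

lemma exists_sign_mul_nonneg (x : ℝ) : ∃ s : ℝ, (s = 1 ∨ s = -1) ∧ 0 ≤ s * x := by
  rcases le_total 0 x with h | h
  · exact ⟨1, .inl rfl, by linarith⟩
  · exact ⟨-1, .inr rfl, by linarith⟩

lemma exists_signs_of_mul_mul_nonneg {p q r : ℝ} (h : 0 ≤ p * q * r) :
    ∃ s t : ℝ, (s = 1 ∨ s = -1) ∧ (t = 1 ∨ t = -1) ∧
      0 ≤ s * p ∧ 0 ≤ t * q ∧ 0 ≤ s * t * r := by
  obtain ⟨s, hs, hsp⟩ := exists_sign_mul_nonneg p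
  obtain ⟨t, ht, htq⟩ := exists_sign_mul_nonneg q
  by_cases hr : 0 ≤ s * t * r
  · exact ⟨s, t, hs, ht, hsp, htq, hr⟩
  have hs2 : s * s = 1 := by rcases hs with rfl | rfl <;> norm_num
  have ht2 : t * t = 1 := by rcases ht with rfl | rfl <;> norm_num
  -- the signs only rescale the product, so a negative third factor forces `p = 0` or `q = 0`
  have hprod : (s * p) * (t * q) * (s * t * r) = p * q * r := by
    linear_combination (p * q * r * t * t) * hs2 + (p * q * r) * ht2
  have hpq : (s * p) * (t * q) = 0 := by nlinarith [mul_nonneg hsp htq]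
  rcases mul_eq_zero.1 hpq with h0 | h0
  · exact ⟨-s, t, by rcases hs with rfl | rfl <;> norm_num, ht, by linarith, htq, by linarith⟩
  · exact ⟨s, -t, hs, by rcases ht with rfl | rfl <;> norm_num, hsp, by linarith, by linarith⟩

lemma sq_le_mul_mul_of_abs_le_one {p q r : ℝ} (h : 0 ≤ p * q * r)
    (hp : |p| ≤ 1) (hq : |q| ≤ 1) (hr : |r| ≤ 1) :
    (p * q) ^ 2 ≤ p * q * r ∨ (p * r) ^ 2 ≤ p * q * r ∨ (q * r) ^ 2 ≤ p * q * r := by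
  by_contra! hlt
  obtain ⟨h1, h2, h3⟩ := hlt
  have hT : p * q * r ≤ 1 := by
    have : |p * q * r| ≤ 1 := by
      rw [abs_mul, abs_mul]
      exact mul_le_one₀ (mul_le_one₀ hp (abs_nonneg _) hq) (abs_nonneg _) hr
    exact (le_abs_self _).trans this
  have hmul : (p * q * r) ^ 3 < (p * q) ^ 2 * (p * r) ^ 2 * (q * r) ^ 2 := by
    rw [pow_three, ← mul_assoc]
    exact mul_lt_mul'' (mul_lt_mul'' h1 h2 h h) h3 (mul_nonneg h h) h
  nlinarith [pow_le_pow_left₀ h hT 3, pow_nonneg h 3]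

lemma inner_nonneg_of_forall_sign_mul_inner_nonneg {ι E : Type*} [Fintype ι]
    [NormedAddCommGroup E] [InnerProductSpace ℝ E] (v : OrthonormalBasis ι ℝ E) {ε : ι → ℝ}
    (hε : ∀ i, ε i = 1 ∨ ε i = -1) {x y : E} (hx : ∀ i, 0 ≤ ε i * ⟪x, v i⟫)
    (hy : ∀ i, 0 ≤ ε i * ⟪y, v i⟫) : 0 ≤ ⟪x, y⟫ := by
  rw [← v.sum_inner_mul_inner]
  refine Finset.sum_nonneg fun i _ => ?_
  have : ⟪x, v i⟫ * ⟪v i, y⟫ = (ε i * ⟪x, v i⟫) * (ε i * ⟪y, v i⟫) := by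
    rw [real_inner_comm (v i) y]
    rcases hε i with h | h <;> rw [h] <;> ring
  exact this ▸ mul_nonneg (hx i) (hy i)

lemma Set.exists_subset_triple_of_ncard_le_three {α : Type*} {s : Set α} (hne : s.Nonempty)
    (hfin : s.Finite) (h : s.ncard ≤ 3) : ∃ a ∈ s, ∃ b ∈ s, ∃ c ∈ s, s ⊆ {a, b, c} := by
  have hpos : 0 < s.ncard := (Set.ncard_pos hfin).2 hne
  obtain h1 | h2 | h3 : s.ncard = 1 ∨ s.ncard = 2 ∨ s.ncard = 3 := by omega
  · obtain ⟨a, rfl⟩ := Set.ncard_eq_one.1 h1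
    exact ⟨a, rfl, a, rfl, a, rfl, by simp⟩
  · obtain ⟨a, b, -, rfl⟩ := Set.ncard_eq_two.1 h2
    exact ⟨a, by simp, b, by simp, b, by simp, by simp⟩
  · obtain ⟨a, b, c, -, -, -, rfl⟩ := Set.ncard_eq_three.1 h3
    exact ⟨a, by simp, b, by simp, c, by simp, subset_rfl⟩

lemma Octahedral.of_forall_mem_or_neg_mem {S T : Set ℝ³} (hT : Octahedral T)
    (hS : ∀ x ∈ S, x ∈ T ∨ -x ∈ T) : Octahedral S := by
  obtain ⟨u, hu, ε, hε, hmem⟩ := hT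
  refine ⟨u, hu, ε, hε, fun x hx => ?_⟩
  rcases hS x hx with hxT | hxT
  · exact hmem x hxT
  · simpa only [inner_neg_left, mul_neg, neg_nonneg, neg_nonpos, or_comm] using hmem (-x) hxT

lemma octahedral_empty : Octahedral ∅ :=
  ⟨_, (EuclideanSpace.basisFun (Fin 3) ℝ).orthonormal, 1, fun _ => .inl rfl, by simp⟩

lemma octahedral_of_forall_inner_nonneg_or_nonpos {S : Set ℝ³} (u : Fin 3 → ℝ³)
    (hu : Orthonormal ℝ u) (h : ∀ i, (∀ x ∈ S, 0 ≤ ⟪x, u i⟫) ∨ (∀ x ∈ S, ⟪x, u i⟫ ≤ 0)) :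
    Octahedral S := by
  classical
  refine ⟨u, hu, fun i => if ∀ x ∈ S, 0 ≤ ⟪x, u i⟫ then 1 else -1,
    fun i => by dsimp only; split_ifs <;> simp, fun x hx => .inl fun i => ?_⟩
  dsimp only
  split_ifs with hi
  · simpa using hi x hx
  · simpa using (h i).resolve_left hi x hx

lemma exists_orthonormalBasis_apply_zero_eq_inner_apply_two_eq_zero {a : ℝ³} (ha : ‖a‖ = 1)
    (b : ℝ³) : ∃ e : OrthonormalBasis (Fin 3) ℝ ℝ³, e 0 = a ∧ ⟪b, e 2⟫ = 0 := by
  -- Gram–Schmidt on `a, b`, padded by a third vector that plays no role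
  let e := gramSchmidtOrthonormalBasis (by simp : Module.finrank ℝ ℝ³ = Fintype.card (Fin 3))
    ![a, b, a]
  have hgs : gramSchmidtNormed ℝ ![a, b, a] 0 = a := by
    have : gramSchmidt ℝ ![a, b, a] 0 = a := gramSchmidt_bot ℝ ![a, b, a]
    simp [gramSchmidtNormed, this, ha]
  refine ⟨e, ?_, ?_⟩
  · rw [← hgs]
    exact gramSchmidtOrthonormalBasis_apply _
      (by rw [hgs]; exact ne_zero_of_norm_ne_zero (by simp [ha]))
  · rw [real_inner_comm]
    exact gramSchmidtOrthonormalBasis_inv_triangular _ ![a, b, a] (i := 1) (by decide)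

lemma octahedral_triple_of_sq_le {a b c : ℝ³} (ha : ‖a‖ = 1)
    (h : (⟪a, b⟫ * ⟪a, c⟫) ^ 2 ≤ ⟪a, b⟫ * ⟪a, c⟫ * ⟪b, c⟫) : Octahedral {a, b, c} := by
  obtain ⟨e, he0, hb2⟩ := exists_orthonormalBasis_apply_zero_eq_inner_apply_two_eq_zero ha b
  have hbc : ⟪b, c⟫ = ⟪a, b⟫ * ⟪a, c⟫ + ⟪b, e 1⟫ * ⟪c, e 1⟫ := by
    rw [← e.sum_inner_mul_inner, Fin.sum_univ_three, he0, hb2, real_inner_comm a b,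
      real_inner_comm c (e 1)]
    ring
  obtain ⟨s, t, hs, ht, hsb, htc, hst⟩ :=
    exists_signs_of_mul_mul_nonneg (p := ⟪a, b⟫) (q := ⟪a, c⟫) (r := ⟪b, e 1⟫ * ⟪c, e 1⟫)
      (by linear_combination h + ⟪a, b⟫ * ⟪a, c⟫ * hbc)
  have hsigned : Octahedral {a, s • b, t • c} := by
    have ha1 : ⟪a, e 1⟫ = 0 := he0 ▸ e.orthonormal.2 (by decide : (0 : Fin 3) ≠ 1)
    have ha2 : ⟪a, e 2⟫ = 0 := he0 ▸ e.orthonormal.2 (by decide : (0 : Fin 3) ≠ 2)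
    refine octahedral_of_forall_inner_nonneg_or_nonpos e e.orthonormal fun i => ?_
    simp only [Set.mem_insert_iff, Set.mem_singleton_iff, forall_eq_or_imp, forall_eq,
      real_inner_smul_left]
    match i with
    | 0 =>
      left
      rw [he0, real_inner_self_eq_norm_sq, ha, real_inner_comm a b, real_inner_comm a c]
      exact ⟨zero_le_one.trans_eq (one_pow 2).symm, hsb, htc⟩
    | 1 =>
      have : 0 ≤ (s * ⟪b, e 1⟫) * (t * ⟪c, e 1⟫) := by linarith
      rw [ha1]
      rcases mul_nonneg_iff.1 this with ⟨h1, h2⟩ | ⟨h1, h2⟩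
      exacts [.inl ⟨le_rfl, h1, h2⟩, .inr ⟨le_rfl, h1, h2⟩]
    | 2 =>
      rw [ha2, hb2, mul_zero]
      rcases le_total 0 (t * ⟪c, e 2⟫) with h | h
      exacts [.inl ⟨le_rfl, le_rfl, h⟩, .inr ⟨le_rfl, le_rfl, h⟩]
  refine hsigned.of_forall_mem_or_neg_mem ?_
  rintro x (rfl | rfl | rfl)
  · simp
  · rcases hs with rfl | rfl <;> simp
  · rcases ht with rfl | rfl <;> simp

lemma octahedral_triple {a b c : ℝ³} (ha : ‖a‖ = 1) (hb : ‖b‖ = 1) (hc : ‖c‖ = 1)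
    (h : 0 ≤ ⟪a, b⟫ * ⟪a, c⟫ * ⟪b, c⟫) : Octahedral {a, b, c} := by
  have hle : ∀ {x y : ℝ³}, ‖x‖ = 1 → ‖y‖ = 1 → |⟪x, y⟫| ≤ 1 := fun hx hy =>
    (abs_real_inner_le_norm _ _).trans_eq (by rw [hx, hy, one_mul])
  rcases sq_le_mul_mul_of_abs_le_one h (hle ha hb) (hle ha hc) (hle hb hc) with h' | h' | h'
  · exact octahedral_triple_of_sq_le ha h'
  · rw [Set.insert_comm]
    exact octahedral_triple_of_sq_le hb (by rw [real_inner_comm a b]; linarith)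
  · rw [Set.pair_comm, Set.insert_comm]
    exact octahedral_triple_of_sq_le hc
      (by rw [real_inner_comm a c, real_inner_comm b c]; linarith)

lemma Octahedral.inner_mul_inner_mul_inner_nonneg {S : Set ℝ³} (hS : Octahedral S) {a b c : ℝ³}
    (ha : a ∈ S) (hb : b ∈ S) (hc : c ∈ S) : 0 ≤ ⟪a, b⟫ * ⟪a, c⟫ * ⟪b, c⟫ := by
  obtain ⟨u, hu, ε, hε, hmem⟩ := hS
  let v : OrthonormalBasis (Fin 3) ℝ ℝ³ :=
    (basisOfOrthonormalOfCardEqFinrank hu (by simp)).toOrthonormalBasis (by simpa using hu)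
  have hv : ⇑v = u := by simp [v]
  have hflip : ∀ x ∈ S, ∃ x', (x' = x ∨ x' = -x) ∧ ∀ i, 0 ≤ ε i * ⟪x', v i⟫ := by
    intro x hx
    rw [hv]
    rcases hmem x hx with h | h
    · exact ⟨x, .inl rfl, h⟩
    · exact ⟨-x, .inr rfl, fun i => by simpa only [inner_neg_left, mul_neg, neg_nonneg] using h i⟩
  obtain ⟨a', ha', hpa⟩ := hflip a ha
  obtain ⟨b', hb', hpb⟩ := hflip b hb
  obtain ⟨c', hc', hpc⟩ := hflip c hc
  have hsigns : ⟪a, b⟫ * ⟪a, c⟫ * ⟪b, c⟫ = ⟪a', b'⟫ * ⟪a', c'⟫ * ⟪b', c'⟫ := by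
    rcases ha' with rfl | rfl <;> rcases hb' with rfl | rfl <;> rcases hc' with rfl | rfl <;>
      simp only [inner_neg_left, inner_neg_right] <;> ring
  rw [hsigns]
  have hab := inner_nonneg_of_forall_sign_mul_inner_nonneg v hε hpa hpb
  have hac := inner_nonneg_of_forall_sign_mul_inner_nonneg v hε hpa hpc
  have hbc := inner_nonneg_of_forall_sign_mul_inner_nonneg v hε hpb hpc
  exact mul_nonneg (mul_nonneg hab hac) hbc

theorem stmt_9 (S : Set (EuclideanSpace ℝ (Fin 3)))
    (hS : S ⊆ {x : EuclideanSpace ℝ (Fin 3) | ‖x‖ = 1}) :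
    (∀ u ∈ S, ∀ v ∈ S, ∀ w ∈ S, (inner ℝ u v : ℝ) * (inner ℝ u w : ℝ) * (inner ℝ v w : ℝ) ≥ 0) ↔
    (∀ S' ⊆ S, S'.Finite → S'.ncard ≤ 3 → Octahedral S') := by
  constructor
  · intro H S' hS' hfin hcard
    rcases S'.eq_empty_or_nonempty with rfl | hne
    · exact octahedral_empty
    obtain ⟨a, ha, b, hb, c, hc, hsub⟩ := Set.exists_subset_triple_of_ncard_le_three hne hfin hcard
    have habc := octahedral_triple (hS (hS' ha)) (hS (hS' hb)) (hS (hS' hc))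
      (H a (hS' ha) b (hS' hb) c (hS' hc))
    exact habc.of_forall_mem_or_neg_mem fun x hx => .inl (hsub hx)
  · intro H a ha b hb c hc
    have hsub : {a, b, c} ⊆ S := by
      rintro x (rfl | rfl | rfl) <;> assumption
    have hcard : ({a, b, c} : Set ℝ³).ncard ≤ 3 :=
      (Set.ncard_insert_le _ _).trans <| Nat.succ_le_succ <|
        (Set.ncard_insert_le _ _).trans (by simp)
    exact (H _ hsub (Set.toFinite _) hcard).inner_mul_inner_mul_inner_nonneg (by simp) (by simp)
      (by simp)
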